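/- Let A be a unital *-algebra over C. Then the following are equivalent: (1) A has sufficiently many positive linear functionals (for every nonzero Hermitian H ∈ A there is a positive linear functional ω with ω(H) ≠ 0); (2) A has a faithful *-representation on a pre-Hilbert space over C; (3) the intersection of all kernels of *-representations of A is {0}. -/

import Mathlib

/-- An ordered ring in the sense of the paper. -/
structure PosCone (R : Type) [CommRing R] (P : Set R) : Prop where
  trichotomy : ∀ a : R, a ∈ P ∨ a = 0 ∨ -a ∈ P
  zero_not_mem : (0 : R) ∉ P
  not_neg_mem : ∀ a : R, a ∈ P → -a ∉ P
  add_mem : ∀ a b : R, a ∈ P → b ∈ P → a + b ∈ P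
  mul_mem : ∀ a b : R, a ∈ P → b ∈ P → a * b ∈ P

/-- The ring `C = R[i] = R(i)` obtained from `R` by adjoining a square root
of `-1`: elements are formal combinations `a + i b`. -/
@[ext] structure Cx (R : Type) : Type where
  re : R
  im : R

namespace Cx
variable {R : Type} [CommRing R]

instance : Zero (Cx R) := ⟨⟨0, 0⟩⟩
instance : One (Cx R) := ⟨⟨1, 0⟩⟩
instance : Add (Cx R) := ⟨fun z w => ⟨z.re + w.re, z.im + w.im⟩⟩
instance : Neg (Cx R) := ⟨fun z => ⟨-z.re, -z.im⟩⟩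
instance : Mul (Cx R) := ⟨fun z w => ⟨z.re * w.re - z.im * w.im, z.re * w.im + z.im * w.re⟩⟩

@[simp] theorem zero_re : (0 : Cx R).re = 0 := rfl
@[simp] theorem zero_im : (0 : Cx R).im = 0 := rfl
@[simp] theorem one_re : (1 : Cx R).re = 1 := rfl
@[simp] theorem one_im : (1 : Cx R).im = 0 := rfl
@[simp] theorem add_re (z w : Cx R) : (z + w).re = z.re + w.re := rfl
@[simp] theorem add_im (z w : Cx R) : (z + w).im = z.im + w.im := rfl
@[simp] theorem neg_re (z : Cx R) : (-z).re = -z.re := rfl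
@[simp] theorem neg_im (z : Cx R) : (-z).im = -z.im := rfl
@[simp] theorem mul_re (z w : Cx R) : (z * w).re = z.re * w.re - z.im * w.im := rfl
@[simp] theorem mul_im (z w : Cx R) : (z * w).im = z.re * w.im + z.im * w.re := rfl

instance : CommRing (Cx R) where
  add_assoc a b c := by ext <;> simp <;> ring
  zero_add a := by ext <;> simp
  add_zero a := by ext <;> simp
  add_comm a b := by ext <;> simp <;> ring
  left_distrib a b c := by ext <;> simp <;> ring
  right_distrib a b c := by ext <;> simp <;> ring
  zero_mul a := by ext <;> simp
  mul_zero a := by ext <;> simp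
  mul_assoc a b c := by ext <;> simp <;> ring
  one_mul a := by ext <;> simp
  mul_one a := by ext <;> simp
  neg_add_cancel a := by ext <;> simp
  mul_comm a b := by ext <;> simp <;> ring
  nsmul := nsmulRec
  zsmul := zsmulRec

/-- Complex conjugation `a + ib ↦ a - ib` on `C = R[i]`. -/
def conj (z : Cx R) : Cx R := ⟨z.re, -z.im⟩

/-- The imaginary unit `i` of `C = R[i]`. -/
def I : Cx R := ⟨0, 1⟩

end Cx

/-- The positive elements of `C = R[i]`: the elements of `P ⊆ R ⊆ C`. -/
def CxPos {R : Type} [CommRing R] (P : Set R) : Set (Cx R) :=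
  {z | z.im = 0 ∧ z.re ∈ P}

/-- The nonnegative elements of `C = R[i]`: elements of `P ∪ {0} ⊆ R ⊆ C`. -/
def CxNonneg {R : Type} [CommRing R] (P : Set R) : Set (Cx R) :=
  {z | z.im = 0 ∧ (z.re = 0 ∨ z.re ∈ P)}

/-- A pre-Hilbert space over `K` (with conjugation `conj` and positivity set
`Pos`): a `K`-module with a Hermitian, positive-definite inner product which
is `K`-linear in the second argument. -/
structure PreHilbert (K : Type) [CommRing K] (conj : K → K) (Pos : Set K)
    (H : Type) [AddCommGroup H] [Module K H] : Type where
  inner : H → H → K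
  inner_add_right : ∀ φ ψ χ : H, inner φ (ψ + χ) = inner φ ψ + inner φ χ
  inner_smul_right : ∀ (z : K) (φ ψ : H), inner φ (z • ψ) = z * inner φ ψ
  inner_conj : ∀ φ ψ : H, inner φ ψ = conj (inner ψ φ)
  inner_pos : ∀ φ : H, φ ≠ 0 → inner φ φ ∈ Pos

/-- A `*`-algebra over `K`: an associative unital `K`-algebra together with an
anti-linear involutive anti-automorphism `star`. -/
structure StarAlgebra (K : Type) [CommRing K] (conj : K → K)
    (A : Type) [Ring A] [Algebra K A] : Type where
  star : A → A
  star_add : ∀ a b : A, star (a + b) = star a + star b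
  star_mul : ∀ a b : A, star (a * b) = star b * star a
  star_star : ∀ a : A, star (star a) = a
  star_smul : ∀ (z : K) (a : A), star (z • a) = conj z • star a

/-- A `K`-linear functional `ω` on a `*`-algebra is positive if
`ω(a*a) ≥ 0` for all `a`. -/
def StarAlgebra.IsPositive {K : Type} [CommRing K] {conj : K → K}
    {A : Type} [Ring A] [Algebra K A] (sa : StarAlgebra K conj A)
    (Nonneg : Set K) (ω : A →ₗ[K] K) : Prop :=
  ∀ a : A, ω (sa.star a * a) ∈ Nonneg

/-- A `*`-representation of a `*`-algebra `A` over `C = R[i]` on a pre-Hilbert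
space over `C`: a `*`-homomorphism of `A` into the adjointable operators. -/
structure StarRep (R : Type) [CommRing R] (P : Set R)
    (A : Type) [Ring A] [Algebra (Cx R) A] (sa : StarAlgebra (Cx R) Cx.conj A) :
    Type 1 where
  H : Type
  [acg : AddCommGroup H]
  [mod : Module (Cx R) H]
  hp : PreHilbert (Cx R) Cx.conj (CxPos P) H
  π : A → H → H
  π_add : ∀ a b : A, π (a + b) = fun φ => π a φ + π b φ
  π_smul : ∀ (z : Cx R) (a : A), π (z • a) = fun φ => z • π a φ
  π_mul : ∀ a b : A, π (a * b) = fun φ => π a (π b φ)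
  π_one : π 1 = id
  map_add : ∀ (a : A) (φ ψ : H), π a (φ + ψ) = π a φ + π a ψ
  map_smul : ∀ (a : A) (z : Cx R) (φ : H), π a (z • φ) = z • π a φ
  adjoint : ∀ (a : A) (φ ψ : H), hp.inner (π a φ) ψ = hp.inner φ (π (sa.star a) ψ)

attribute [instance] StarRep.acg StarRep.mod

/-!
(2) ⇒ (3) is immediate. For (3) ⇒ (1): the vector functionals `a ↦ ⟨φ, π(a) φ⟩` are positive,
and complex polarization, which only needs `2` and `i` to be cancellable in `R[i]`, shows that
`π(a) ≠ 0` makes one of them nonzero at `a`. For (1) ⇒ (2): for `a ≠ 0` one of `a + a*`, `i a`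
is a nonzero Hermitian element, so some positive `ω` has `ω(a) ≠ 0`; then `π_ω(a) [1] = [a] ≠ 0`
in the GNS representation of `ω`, and the direct sum of the GNS representations of all positive
functionals is faithful. As `R` has no division, the Cauchy–Schwarz step of GNS
(`ω(a* a) = 0 ⇒ ω(b* a) = 0`) is done by evaluating `ω` on a single explicit vector.
-/

open scoped DirectSum

section

variable {R : Type} [CommRing R] {P : Set R}

namespace PosCone

theorem mul_self_mem (hP : PosCone R P) {a : R} (ha : a ≠ 0) : a * a ∈ P := by
  rcases hP.trichotomy a with h | rfl | h
  · exact hP.mul_mem _ _ h h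
  · exact absurd rfl ha
  · simpa using hP.mul_mem _ _ h h

theorem eq_zero_of_add_self_eq_zero (hP : PosCone R P) {a : R} (h : a + a = 0) : a = 0 := by
  rcases hP.trichotomy a with ha | ha | ha
  · exact absurd (h ▸ hP.add_mem _ _ ha ha) hP.zero_not_mem
  · exact ha
  · have := hP.add_mem _ _ ha ha
    rw [← neg_add, h, neg_zero] at this
    exact absurd this hP.zero_not_mem

end PosCone

namespace Cx

@[simp] theorem conj_re (z : Cx R) : (conj z).re = z.re := rfl
@[simp] theorem conj_im (z : Cx R) : (conj z).im = -z.im := rfl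
@[simp] theorem I_re : (I : Cx R).re = 0 := rfl
@[simp] theorem I_im : (I : Cx R).im = 1 := rfl

def conjRingHom : Cx R →+* Cx R where
  toFun := conj
  map_one' := by ext <;> simp
  map_mul' z w := by ext <;> simp; ring
  map_zero' := by ext <;> simp
  map_add' z w := by ext <;> simp; ring

@[simp] theorem conjRingHom_apply (z : Cx R) : conjRingHom z = conj z := rfl

theorem I_mul_I : (I : Cx R) * I = -1 := by ext <;> simp

theorem conj_I : conj (I : Cx R) = -I := by ext <;> simp

theorem normSq_mem (hP : PosCone R P) {w : Cx R} (hw : w ≠ 0) :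
    w.re * w.re + w.im * w.im ∈ P := by
  by_cases hre : w.re = 0
  · have him : w.im ≠ 0 := fun him => hw (Cx.ext hre him)
    simpa [hre] using hP.mul_self_mem him
  by_cases him : w.im = 0
  · simpa [him] using hP.mul_self_mem hre
  exact hP.add_mem _ _ (hP.mul_self_mem hre) (hP.mul_self_mem him)

end Cx

theorem CxPos.ne_zero (hP : PosCone R P) {z : Cx R} (hz : z ∈ CxPos P) : z ≠ 0 := by
  rintro rfl
  exact hP.zero_not_mem hz.2

theorem CxPos.add_mem (hP : PosCone R P) {z w : Cx R} (hz : z ∈ CxPos P)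
    (hw : w ∈ CxPos P) : z + w ∈ CxPos P :=
  ⟨by simp [hz.1, hw.1], hP.add_mem _ _ hz.2 hw.2⟩

theorem CxNonneg.of_pos {z : Cx R} (hz : z ∈ CxPos P) : z ∈ CxNonneg P :=
  ⟨hz.1, Or.inr hz.2⟩

theorem CxNonneg.pos_of_ne_zero {z : Cx R} (hz : z ∈ CxNonneg P) (h0 : z ≠ 0) :
    z ∈ CxPos P :=
  ⟨hz.1, hz.2.resolve_left fun h => h0 (Cx.ext h hz.1)⟩

section SesqForm

variable {M : Type*} [AddCommGroup M] [Module (Cx R) M]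
  (B : M →ₛₗ[Cx.conjRingHom (R := R)] M →ₗ[Cx R] Cx R)

theorem LinearMap.isSymm_of_im_apply_self_eq_zero (h : ∀ x, (B x x).im = 0) : B.IsSymm := by
  refine ⟨fun x y => ?_⟩
  have h1 := h (x + y)
  have h2 := h (x + (Cx.I : Cx R) • y)
  simp only [map_add, map_smulₛₗ, LinearMap.add_apply, LinearMap.smul_apply, smul_eq_mul,
    Cx.conjRingHom_apply, RingHom.id_apply, Cx.add_im, Cx.mul_im, Cx.add_re, Cx.mul_re,
    Cx.conj_re, Cx.conj_im, Cx.I_re, Cx.I_im] at h1 h2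
  ext
  · simp only [Cx.conjRingHom_apply, Cx.conj_re]
    linear_combination h2 - h x - h y
  · simp only [Cx.conjRingHom_apply, Cx.conj_im]
    linear_combination h x + h y - h1

theorem LinearMap.apply_eq_zero_of_forall_apply_self_eq_zero (hP : PosCone R P)
    (h : ∀ x, B x x = 0) (x y : M) : B x y = 0 := by
  have hB := (B.isSymm_of_im_apply_self_eq_zero fun x => by simp [h]).eq x y
  have hIB := (((Cx.I : Cx R) • B).isSymm_of_im_apply_self_eq_zero fun x => by
    rw [LinearMap.smul_apply, LinearMap.smul_apply, h, smul_zero, Cx.zero_im]).eq x y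
  simp only [LinearMap.smul_apply, smul_eq_mul, map_mul, ← hB] at hIB
  have hre := congrArg Cx.im hIB
  have him := congrArg Cx.re hIB
  simp only [Cx.conjRingHom_apply, Cx.mul_re, Cx.mul_im, Cx.conj_re, Cx.conj_im, Cx.I_re,
    Cx.I_im] at hre him
  exact Cx.ext (hP.eq_zero_of_add_self_eq_zero (by linear_combination -hre))
    (hP.eq_zero_of_add_self_eq_zero (by linear_combination -him))

theorem LinearMap.apply_eq_zero_of_apply_self_eq_zero (hP : PosCone R P)
    (hB : ∀ x, B x x ∈ CxNonneg P) {x : M} (hx : B x x = 0) (y : M) : B y x = 0 := by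
  have hsymm := B.isSymm_of_im_apply_self_eq_zero fun z => (hB z).1
  by_contra hw
  set w := B y x
  set c := B y y
  set s := w.re * w.re + w.im * w.im
  have hs : s ∈ P := Cx.normSq_mem hP hw
  have hcs : s * (c.re + s + s) ∈ P := by
    refine hP.mul_mem _ _ hs ?_
    rcases (hB y).2 with hc | hc
    · rw [hc, zero_add]
      exact hP.add_mem _ _ hs hs
    · exact hP.add_mem _ _ (hP.add_mem _ _ hc hs) hs
  -- `B v v = s (c + 2 λ)` for the real scalar `λ = -(c + s)`
  set v := w • y + (⟨-(c.re + s), 0⟩ : Cx R) • x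
  have hval : B v v = ⟨-(s * (c.re + s + s)), 0⟩ := by
    simp only [v, map_add, map_smulₛₗ, LinearMap.add_apply, LinearMap.smul_apply, smul_eq_mul, hx,
      ← hsymm.eq y x]
    ext <;> simp only [w, c, s, RingHom.id_apply, Cx.conjRingHom_apply, Cx.add_re, Cx.add_im,
      Cx.mul_re, Cx.mul_im, Cx.conj_re, Cx.conj_im, Cx.zero_re, Cx.zero_im]
    · ring
    · linear_combination s * (hB y).1
  rcases (hval ▸ hB _).2 with h | h
  · exact hP.zero_not_mem (neg_eq_zero.mp h ▸ hcs)
  · exact hP.not_neg_mem _ hcs h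

end SesqForm

namespace StarAlgebra

variable {A : Type} [Ring A] [Algebra (Cx R) A] (sa : StarAlgebra (Cx R) Cx.conj A)

theorem star_one : sa.star 1 = 1 :=
  calc sa.star 1 = sa.star 1 * sa.star (sa.star 1) := by rw [sa.star_star, mul_one]
    _ = sa.star (sa.star 1 * 1) := (sa.star_mul _ _).symm
    _ = 1 := by rw [mul_one, sa.star_star]

def form (ω : A →ₗ[Cx R] Cx R) : A →ₛₗ[Cx.conjRingHom (R := R)] A →ₗ[Cx R] Cx R :=
  LinearMap.mk₂'ₛₗ _ _ (fun a b => ω (sa.star a * b))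
    (fun a₁ a₂ b => by rw [sa.star_add, add_mul, map_add])
    (fun z a b => by rw [sa.star_smul, smul_mul_assoc, map_smul]; rfl)
    (fun a b₁ b₂ => by rw [mul_add, map_add])
    (fun z a b => by rw [mul_smul_comm, map_smul]; rfl)

@[simp] theorem form_apply (ω : A →ₗ[Cx R] Cx R) (a b : A) :
    sa.form ω a b = ω (sa.star a * b) := rfl

variable {sa} {ω : A →ₗ[Cx R] Cx R}

theorem IsPositive.isSymm_form (hω : sa.IsPositive (CxNonneg P) ω) : (sa.form ω).IsSymm :=
  (sa.form ω).isSymm_of_im_apply_self_eq_zero fun a => (hω a).1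

theorem IsPositive.map_star (hω : sa.IsPositive (CxNonneg P) ω) (a : A) :
    ω (sa.star a) = Cx.conj (ω a) := by
  simpa [sa.star_one] using (hω.isSymm_form.eq 1 a).symm

variable (sa P) in
def HasSufficientlyManyPositiveFunctionals : Prop :=
  ∀ h : A, sa.star h = h → h ≠ 0 → ∃ ω : A →ₗ[Cx R] Cx R, sa.IsPositive (CxNonneg P) ω ∧ ω h ≠ 0

theorem HasSufficientlyManyPositiveFunctionals.exists_isPositive_apply_ne_zero
    (h1 : sa.HasSufficientlyManyPositiveFunctionals P) {a : A} (ha : a ≠ 0) :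
    ∃ ω : A →ₗ[Cx R] Cx R, sa.IsPositive (CxNonneg P) ω ∧ ω a ≠ 0 := by
  by_cases hskew : a + sa.star a = 0
  · have hI : sa.star ((Cx.I : Cx R) • a) = (Cx.I : Cx R) • a := by
      rw [sa.star_smul, eq_neg_of_add_eq_zero_right hskew, Cx.conj_I, smul_neg, neg_smul, neg_neg]
    have hIa : (Cx.I : Cx R) • a ≠ 0 := fun h => ha <| by
      simpa [smul_smul, Cx.I_mul_I] using congrArg ((Cx.I : Cx R) • ·) h
    obtain ⟨ω, hω, hωa⟩ := h1 _ hI hIa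
    exact ⟨ω, hω, fun h0 => hωa (by rw [map_smul, h0, smul_zero])⟩
  · obtain ⟨ω, hω, hωa⟩ := h1 _ (by rw [sa.star_add, sa.star_star, add_comm]) hskew
    refine ⟨ω, hω, fun h0 => hωa ?_⟩
    rw [map_add, hω.map_star, h0]
    ext <;> simp

end StarAlgebra

section GNS

variable {A : Type} [Ring A] [Algebra (Cx R) A] {sa : StarAlgebra (Cx R) Cx.conj A}
  {ω : A →ₗ[Cx R] Cx R}

variable (sa ω) in
def gnsNull : Submodule (Cx R) A := LinearMap.ker (sa.form ω).flip

theorem mem_gnsNull {x : A} : x ∈ gnsNull sa ω ↔ ∀ y, ω (sa.star y * x) = 0 := by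
  simp [gnsNull, LinearMap.ext_iff]

theorem mem_gnsNull_iff_map_star_mul_self (hP : PosCone R P)
    (hω : sa.IsPositive (CxNonneg P) ω) {x : A} :
    x ∈ gnsNull sa ω ↔ ω (sa.star x * x) = 0 :=
  ⟨fun h => mem_gnsNull.1 h x, fun h => mem_gnsNull.2
    ((sa.form ω).apply_eq_zero_of_apply_self_eq_zero hP hω h)⟩

theorem mul_mem_gnsNull {x : A} (hx : x ∈ gnsNull sa ω) (c : A) : c * x ∈ gnsNull sa ω := by
  refine mem_gnsNull.2 fun y => ?_
  rw [← mul_assoc, ← sa.star_star c, ← sa.star_mul]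
  exact mem_gnsNull.1 hx _

/-- `(a, b) ↦ ω(a* b)` descends to the quotient in its second argument since `gnsNull` is its
right radical, and in its first one by symmetry. -/
noncomputable def gnsForm (hω : sa.IsPositive (CxNonneg P) ω) :
    (A ⧸ gnsNull sa ω) →ₛₗ[Cx.conjRingHom (R := R)] (A ⧸ gnsNull sa ω) →ₗ[Cx R] Cx R :=
  (gnsNull sa ω).liftQ ((gnsNull sa ω).liftQ (sa.form ω).flip le_rfl).flip fun x hx => by
    refine Submodule.linearMap_qext _ (LinearMap.ext fun y => ?_)
    exact hω.isSymm_form.isRefl _ _ (LinearMap.congr_fun (LinearMap.mem_ker.1 hx) y)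

variable (sa ω) in
noncomputable def gnsAction (x : A) : (A ⧸ gnsNull sa ω) →ₗ[Cx R] A ⧸ gnsNull sa ω :=
  (gnsNull sa ω).mapQ _ (LinearMap.mulLeft (Cx R) x) fun _ hy => mul_mem_gnsNull hy x

@[simp] theorem gnsAction_mk (x b : A) :
    gnsAction sa ω x (Submodule.Quotient.mk b) = Submodule.Quotient.mk (x * b) := rfl

noncomputable def gnsRep (hP : PosCone R P) (hω : sa.IsPositive (CxNonneg P) ω) :
    StarRep R P A sa where
  H := A ⧸ gnsNull sa ω
  hp :=
    { inner := fun φ ψ => gnsForm hω φ ψ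
      inner_add_right := fun φ => map_add (gnsForm hω φ)
      inner_smul_right := fun z φ => map_smul (gnsForm hω φ) z
      inner_conj := by
        rintro ⟨a⟩ ⟨b⟩
        exact (hω.isSymm_form.eq b a).symm
      inner_pos := by
        rintro ⟨a⟩ ha
        refine CxNonneg.pos_of_ne_zero (hω a) fun h0 => ha ?_
        exact (Submodule.Quotient.mk_eq_zero _).2 ((mem_gnsNull_iff_map_star_mul_self hP hω).2 h0) }
  π x := gnsAction sa ω x
  π_add a b := by
    funext φ
    induction φ using Submodule.Quotient.induction_on
    simp [add_mul]
  π_smul z a := by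
    funext φ
    induction φ using Submodule.Quotient.induction_on
    simp
  π_mul a b := by
    funext φ
    induction φ using Submodule.Quotient.induction_on
    simp [mul_assoc]
  π_one := by
    funext φ
    induction φ using Submodule.Quotient.induction_on
    simp
  map_add x := map_add (gnsAction sa ω x)
  map_smul x := map_smul (gnsAction sa ω x)
  adjoint x := by
    rintro ⟨a⟩ ⟨b⟩
    show ω (sa.star (x * a) * b) = ω (sa.star a * (sa.star x * b))
    rw [sa.star_mul, mul_assoc]

theorem exists_gnsRep_π_ne_zero (hP : PosCone R P) (hω : sa.IsPositive (CxNonneg P) ω)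
    {a : A} (ha : ω a ≠ 0) : ∃ φ, (gnsRep hP hω).π a φ ≠ 0 := by
  refine ⟨Submodule.Quotient.mk 1, fun h => ha ?_⟩
  have h' : Submodule.Quotient.mk (a * 1) = (0 : A ⧸ gnsNull sa ω) := h
  simpa [sa.star_one] using mem_gnsNull.1 ((Submodule.Quotient.mk_eq_zero _).1 h') 1

end GNS

namespace PreHilbert

variable {H : Type} [AddCommGroup H] [Module (Cx R) H]
  (hp : PreHilbert (Cx R) Cx.conj (CxPos P) H)

def sesqForm : H →ₛₗ[Cx.conjRingHom (R := R)] H →ₗ[Cx R] Cx R :=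
  LinearMap.mk₂'ₛₗ _ _ hp.inner
    (fun φ ψ χ => by
      rw [hp.inner_conj, hp.inner_add_right, hp.inner_conj φ, hp.inner_conj ψ]
      exact map_add Cx.conjRingHom _ _)
    (fun z φ ψ => by
      rw [hp.inner_conj, hp.inner_smul_right, hp.inner_conj φ]
      exact map_mul Cx.conjRingHom _ _)
    hp.inner_add_right hp.inner_smul_right

theorem inner_zero_left (φ : H) : hp.inner 0 φ = 0 :=
  hp.sesqForm.map_zero₂ φ

theorem inner_self_mem_nonneg (φ : H) : hp.inner φ φ ∈ CxNonneg P := by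
  by_cases hφ : φ = 0
  · rw [hφ, inner_zero_left]
    exact ⟨rfl, Or.inl rfl⟩
  · exact CxNonneg.of_pos (hp.inner_pos φ hφ)

end PreHilbert

namespace StarRep

variable {A : Type} [Ring A] [Algebra (Cx R) A] {sa : StarAlgebra (Cx R) Cx.conj A}
  (ρ : StarRep R P A sa)

def IsFaithful : Prop := ∀ a : A, (∀ φ : ρ.H, ρ.π a φ = 0) → a = 0

def toLinearMap (a : A) : ρ.H →ₗ[Cx R] ρ.H where
  toFun := ρ.π a
  map_add' := ρ.map_add a
  map_smul' := ρ.map_smul a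

@[simp] theorem toLinearMap_apply (a : A) (φ : ρ.H) : ρ.toLinearMap a φ = ρ.π a φ := rfl

def vectorFunctional (φ : ρ.H) : A →ₗ[Cx R] Cx R where
  toFun a := ρ.hp.inner φ (ρ.π a φ)
  map_add' a b := by rw [ρ.π_add, ρ.hp.inner_add_right]
  map_smul' z a := by rw [ρ.π_smul, ρ.hp.inner_smul_right]; rfl

theorem isPositive_vectorFunctional (φ : ρ.H) :
    sa.IsPositive (CxNonneg P) (ρ.vectorFunctional φ) := fun a => by
  show ρ.hp.inner φ (ρ.π (sa.star a * a) φ) ∈ CxNonneg P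
  rw [ρ.π_mul, ← ρ.adjoint]
  exact ρ.hp.inner_self_mem_nonneg _

theorem exists_vectorFunctional_apply_ne_zero (hP : PosCone R P) {a : A} {ψ : ρ.H}
    (hψ : ρ.π a ψ ≠ 0) : ∃ φ, ρ.vectorFunctional φ a ≠ 0 := by
  by_contra! h
  refine CxPos.ne_zero hP (ρ.hp.inner_pos _ hψ) ?_
  exact (ρ.hp.sesqForm.compl₂ (ρ.toLinearMap a)).apply_eq_zero_of_forall_apply_self_eq_zero
    hP h _ _

variable {ι : Type}

open scoped Classical in
noncomputable def directSumInner (F : ι → StarRep R P A sa) (φ ψ : ⨁ i, (F i).H) : Cx R :=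
  ∑ i ∈ φ.support, (F i).hp.inner (φ i) (ψ i)

open scoped Classical in
theorem directSumInner_eq_sum (F : ι → StarRep R P A sa) {φ : ⨁ i, (F i).H}
    (ψ : ⨁ i, (F i).H) {s : Finset ι} (hs : φ.support ⊆ s) :
    directSumInner F φ ψ = ∑ i ∈ s, (F i).hp.inner (φ i) (ψ i) :=
  Finset.sum_subset hs fun i _ hi => by
    rw [DFinsupp.notMem_support_iff.1 hi, PreHilbert.inner_zero_left]

noncomputable def directSum (hP : PosCone R P) (F : ι → StarRep R P A sa) :
    StarRep R P A sa where
  H := ⨁ i, (F i).H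
  hp :=
    { inner := directSumInner F
      inner_add_right φ ψ χ := by
        simp only [directSumInner, DirectSum.add_apply, PreHilbert.inner_add_right,
          Finset.sum_add_distrib]
      inner_smul_right z φ ψ := by
        simp only [directSumInner, DirectSum.smul_apply, PreHilbert.inner_smul_right,
          Finset.mul_sum]
      inner_conj φ ψ := by
        classical
        rw [directSumInner_eq_sum F ψ Finset.subset_union_left,
          directSumInner_eq_sum F φ (Finset.subset_union_right (s₁ := φ.support)),
          ← Cx.conjRingHom_apply, map_sum]
        exact Finset.sum_congr rfl fun i _ => (F i).hp.inner_conj _ _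
      inner_pos φ hφ := by
        classical
        refine Finset.sum_induction_nonempty _ (· ∈ CxPos P) (fun _ _ => CxPos.add_mem hP)
          ?_ fun i hi => (F i).hp.inner_pos _ (DFinsupp.mem_support_iff.1 hi)
        exact Finset.nonempty_iff_ne_empty.2 (mt DFinsupp.support_eq_empty.1 hφ) }
  π a := DFinsupp.mapRange.linearMap fun i => (F i).toLinearMap a
  π_add a b := by
    funext φ
    ext i
    simp [(F i).π_add]
  π_smul z a := by
    funext φ
    ext i
    simp [DirectSum.smul_apply, (F i).π_smul]
  π_mul a b := by
    funext φ
    ext i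
    simp [(F i).π_mul]
  π_one := by
    funext φ
    ext i
    simp [(F i).π_one]
  map_add a := LinearMap.map_add _
  map_smul a := LinearMap.map_smul _
  adjoint a φ ψ := by
    classical
    show directSumInner F (DFinsupp.mapRange.linearMap _ φ) ψ =
      directSumInner F φ (DFinsupp.mapRange.linearMap _ ψ)
    rw [DFinsupp.mapRange.linearMap_apply, DFinsupp.mapRange.linearMap_apply,
      directSumInner_eq_sum F ψ DFinsupp.support_mapRange]
    exact Finset.sum_congr rfl fun i _ => (F i).adjoint _ _ _

theorem directSum_π_of (hP : PosCone R P) (F : ι → StarRep R P A sa) [DecidableEq ι]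
    (a : A) (i : ι) (φ : (F i).H) :
    (directSum hP F).π a (DirectSum.of (fun i => (F i).H) i φ) =
      DirectSum.of (fun i => (F i).H) i ((F i).π a φ) :=
  (DFinsupp.mapRange.linearMap_apply _ _).trans DFinsupp.mapRange_single

theorem isFaithful_directSum (hP : PosCone R P) (F : ι → StarRep R P A sa)
    (hF : ∀ a : A, a ≠ 0 → ∃ i, ∃ φ : (F i).H, (F i).π a φ ≠ 0) :
    (directSum hP F).IsFaithful := by
  classical
  intro a ha
  by_contra ha0
  obtain ⟨i, φ, hφ⟩ := hF a ha0
  refine hφ (DirectSum.of_injective (β := fun i => (F i).H) i ?_)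
  exact (directSum_π_of hP F a i φ).symm.trans ((ha _).trans (map_zero _).symm)

end StarRep

namespace StarAlgebra

variable {A : Type} [Ring A] [Algebra (Cx R) A] {sa : StarAlgebra (Cx R) Cx.conj A}

theorem HasSufficientlyManyPositiveFunctionals.exists_isFaithful (hP : PosCone R P)
    (h1 : sa.HasSufficientlyManyPositiveFunctionals P) : ∃ ρ : StarRep R P A sa, ρ.IsFaithful :=
  ⟨StarRep.directSum hP fun ω : {ω // sa.IsPositive (CxNonneg P) ω} => gnsRep hP ω.2,
    StarRep.isFaithful_directSum hP _ fun _ ha => by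
      obtain ⟨ω, hω, hωa⟩ := h1.exists_isPositive_apply_ne_zero ha
      exact ⟨⟨ω, hω⟩, exists_gnsRep_π_ne_zero hP hω hωa⟩⟩

theorem hasSufficientlyManyPositiveFunctionals_of_separating (hP : PosCone R P)
    (h3 : ∀ a : A, (∀ ρ : StarRep R P A sa, ∀ φ : ρ.H, ρ.π a φ = 0) → a = 0) :
    sa.HasSufficientlyManyPositiveFunctionals P := fun h _ hh => by
  obtain ⟨ρ, ψ, hψ⟩ : ∃ ρ : StarRep R P A sa, ∃ ψ, ρ.π h ψ ≠ 0 := by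
    by_contra! hzero
    exact hh (h3 h hzero)
  obtain ⟨φ, hφ⟩ := ρ.exists_vectorFunctional_apply_ne_zero hP hψ
  exact ⟨_, ρ.isPositive_vectorFunctional φ, hφ⟩

end StarAlgebra

end

theorem sufficiently_many_positive_functionals_tfae_general (R : Type) [CommRing R]
    (P : Set R) (hP : PosCone R P)
    (A : Type) [Ring A] [Algebra (Cx R) A]
    (sa : StarAlgebra (Cx R) Cx.conj A) :
    ((∀ h : A, sa.star h = h → h ≠ 0 →
        ∃ ω : A →ₗ[Cx R] Cx R, sa.IsPositive (CxNonneg P) ω ∧ ω h ≠ 0) ↔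
      (∃ ρ : StarRep R P A sa, ∀ a : A, (∀ φ : ρ.H, ρ.π a φ = 0) → a = 0)) ∧
    ((∃ ρ : StarRep R P A sa, ∀ a : A, (∀ φ : ρ.H, ρ.π a φ = 0) → a = 0) ↔
      (∀ a : A, (∀ ρ : StarRep R P A sa, ∀ φ : ρ.H, ρ.π a φ = 0) → a = 0)) := by
  have one_to_two := StarAlgebra.HasSufficientlyManyPositiveFunctionals.exists_isFaithful
    (sa := sa) hP
  have three_to_one := StarAlgebra.hasSufficientlyManyPositiveFunctionals_of_separating
    (sa := sa) hP
  have two_to_three (h2 : ∃ ρ : StarRep R P A sa, ρ.IsFaithful) (a : A)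
      (ha : ∀ ρ : StarRep R P A sa, ∀ φ : ρ.H, ρ.π a φ = 0) : a = 0 :=
    h2.elim fun ρ hρ => hρ a (ha ρ)
  exact ⟨⟨one_to_two, fun h2 => three_to_one (two_to_three h2)⟩,
    ⟨two_to_three, fun h3 => one_to_two (three_to_one h3)⟩⟩

/-- for a unital `*`-algebra `A` over `C = R[i]`, the following
are equivalent: (1) `A` has sufficiently many positive linear functionals;
(2) `A` has a faithful `*`-representation on a pre-Hilbert space over `C`;
(3) the intersection of all kernels of `*`-representations of `A` is `{0}`. -/
theorem sufficiently_many_positive_functionals_tfae (R : Type) [CommRing R]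
    [Nontrivial R] (P : Set R) (hP : PosCone R P)
    (A : Type) [Ring A] [Algebra (Cx R) A]
    (sa : StarAlgebra (Cx R) Cx.conj A) :
    ((∀ h : A, sa.star h = h → h ≠ 0 →
        ∃ ω : A →ₗ[Cx R] Cx R, sa.IsPositive (CxNonneg P) ω ∧ ω h ≠ 0) ↔
      (∃ ρ : StarRep R P A sa, ∀ a : A, (∀ φ : ρ.H, ρ.π a φ = 0) → a = 0)) ∧
    ((∃ ρ : StarRep R P A sa, ∀ a : A, (∀ φ : ρ.H, ρ.π a φ = 0) → a = 0) ↔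
      (∀ a : A, (∀ ρ : StarRep R P A sa, ∀ φ : ρ.H, ρ.π a φ = 0) → a = 0)) :=
  sufficiently_many_positive_functionals_tfae_general R P hP A sa
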